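/- arXiv:2512.10779 — 5 statements merged into one kernel-verified Lean document; each statement's English description precedes it below -/
import Mathlib

section
/- In every possible-world model M over an LL-frame (an SL-frame whose modal relation R is reflexive and transitive), the box modality collapses: for every formula A of lax logic and every world w, M,w ⊩ A if and only if M,w ⊩ □A, where M,w ⊩ □A is defined to hold iff for all worlds w', v with w ≤ w' and w' R v, M,v ⊩ A. -/
/-- Formulas of lax logic: atoms, ⊤, ∧, →, ◇. -/
inductive Formula : Type
  | atom : ℕ → Formula
  | top : Formula
  | and : Formula → Formula → Formula
  | imp : Formula → Formula → Formula
  | dia : Formula → Formula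

/-- An SL-frame: worlds with a reflexive-transitive relation `le` and a modal
relation `R` satisfying forward confluence and inclusion. -/
structure SLFrame where
  W : Type
  le : W → W → Prop
  R : W → W → Prop
  le_refl : ∀ w, le w w
  le_trans : ∀ {w w' w''}, le w w' → le w' w'' → le w w''
  forward : ∀ {w w' v}, le w w' → R w v → ∃ v', R w' v' ∧ le v v'
  incl : ∀ {w v}, R w v → le w v

/-- A possible-world model over an SL-frame: a valuation of atoms that is
upward closed under `le`. -/
structure SLModel extends SLFrame where
  V : ℕ → W → Prop
  V_mono : ∀ p {w w'}, le w w' → V p w → V p w'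

/-- The satisfaction relation `M,w ⊩ A`. -/
def Sat (M : SLModel) : M.W → Formula → Prop
  | w, .atom p => M.V p w
  | _, .top => True
  | w, .and A B => Sat M w A ∧ Sat M w B
  | w, .imp A B => ∀ w', M.le w w' → Sat M w' A → Sat M w' B
  | w, .dia A => ∃ v, M.R w v ∧ Sat M v A

/-- Satisfaction of the box modality: `M,w ⊩ □A` iff for all `w'`, `v` with
`w ≤ w'` and `w' R v`, `M,v ⊩ A`. -/
def SatBox (M : SLModel) (w : M.W) (A : Formula) : Prop :=
  ∀ w' v, M.le w w' → M.R w' v → Sat M v A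

lemma Sat_mono (M : SLModel) : ∀ (A : Formula) {w w' : M.W},
    M.le w w' → Sat M w A → Sat M w' A := by
  intro A
  induction A with
  | atom p => intro w w' h hs; exact M.V_mono p h hs
  | top => intro _ _ _ _; trivial
  | and A B ihA ihB => intro w w' h hs; exact ⟨ihA h hs.1, ihB h hs.2⟩
  | imp A B ihA ihB =>
      intro w w' h hs w'' h' hA
      exact hs w'' (M.le_trans h h') hA
  | dia A ih =>
      intro w w' h hs
      obtain ⟨v, hR, hv⟩ := hs
      obtain ⟨v', hR', hle⟩ := M.forward h hR
      exact ⟨v', hR', ih hle hv⟩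

/-- in every possible-world model over an LL-frame (an SL-frame
whose modal relation R is reflexive and transitive), the box modality
collapses: `M,w ⊩ A` iff `M,w ⊩ □A`. -/
theorem box_collapses (M : SLModel) (hrefl : ∀ w, M.R w w)
    (htrans : ∀ {u v w : M.W}, M.R u v → M.R v w → M.R u w) :
    ∀ (A : Formula) (w : M.W), Sat M w A ↔ SatBox M w A := by
  intro A w
  constructor
  · intro h w' v hle hR
    exact Sat_mono M A (M.le_trans hle (M.incl hR)) h
  · intro h
    exact h w w (M.le_refl w) (hrefl w)
end

section
/- For every proof-relevant SLC-frame, the assignment P ↦ ◇P is a well-defined endofunctor of the presheaf category Psh(W) = W ⥤ Type, and it is strong: the maps σ_{P,Q,w} : P(w) × (◇Q)(w) → (◇(P×Q))(w) given by σ(p,(v,m,q)) = (v, m, (P(incl m)(p), q)) are natural in w, natural in P and Q, and satisfy the unit coherence law (σ_{⊤,Q} followed by ◇(π₂) equals π₂ : ⊤ × ◇Q ⟶ ◇Q) and the associativity coherence law (σ_{P×Q,R} followed by ◇(associator) equals the associator followed by id_P × σ_{Q,R} followed by σ_{P,Q×R}), where products of presheaves are computed pointwise. -/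
/-!
The presheaf laws for `◇P` are the identity and composition laws of `factor`, which hold
only up to the equations between the resulting worlds (hence the heterogeneous equalities);
naturality of the strength in `w` is the law `incl m ≫ factor₂ i m = i ≫ incl (factor₁ i m)`.
Everything else is naturality of the given transformations or holds definitionally.
-/

open CategoryTheory

/-- A proof-relevant SLC-frame: a category `W` of worlds, a proof-relevant
modal relation `R`, an inclusion `incl` of `R` into the morphisms of `W`, and
a forward-confluence operation `factor` (split into the resulting world
`factorW`, the modal proof `factor₁` and the intuitionistic proof `factor₂`),
subject to the coherence laws. -/
structure SLCFrame where
  W : Type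
  [instCat : Category.{0} W]
  R : W → W → Type
  incl : ∀ {w v : W}, R w v → (w ⟶ v)
  factorW : ∀ {w w' v : W}, (w ⟶ w') → R w v → W
  factor₁ : ∀ {w w' v : W} (i : w ⟶ w') (m : R w v), R w' (factorW i m)
  factor₂ : ∀ {w w' v : W} (i : w ⟶ w') (m : R w v), v ⟶ factorW i m
  factorW_id : ∀ {w v : W} (m : R w v), factorW (𝟙 w) m = v
  factor₁_id : ∀ {w v : W} (m : R w v), HEq (factor₁ (𝟙 w) m) m
  factor₂_id : ∀ {w v : W} (m : R w v), HEq (factor₂ (𝟙 w) m) (𝟙 v)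
  factorW_comp : ∀ {w w' w'' v : W} (i : w ⟶ w') (j : w' ⟶ w'') (m : R w v),
    factorW (i ≫ j) m = factorW j (factor₁ i m)
  factor₁_comp : ∀ {w w' w'' v : W} (i : w ⟶ w') (j : w' ⟶ w'') (m : R w v),
    HEq (factor₁ (i ≫ j) m) (factor₁ j (factor₁ i m))
  factor₂_comp : ∀ {w w' w'' v : W} (i : w ⟶ w') (j : w' ⟶ w'') (m : R w v),
    HEq (factor₂ (i ≫ j) m) (factor₂ i m ≫ factor₂ j (factor₁ i m))
  incl_natural : ∀ {w w' v : W} (i : w ⟶ w') (m : R w v),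
    incl m ≫ factor₂ i m = i ≫ incl (factor₁ i m)

attribute [instance] SLCFrame.instCat

variable (F : SLCFrame)

/-- The object part of the presheaf `◇P`: `(◇P)(w) = Σ v, (w R v) × P(v)`. -/
def DiaObj (P : F.W ⥤ Type) (w : F.W) : Type :=
  Σ v : F.W, F.R w v × P.obj v

/-- Transport of `◇P` along `i : w ⟶ w'`, via `factor`. -/
def DiaMap (P : F.W ⥤ Type) {w w' : F.W} (i : w ⟶ w') :
    DiaObj F P w → DiaObj F P w' :=
  fun x => ⟨F.factorW i x.2.1, F.factor₁ i x.2.1, P.map (F.factor₂ i x.2.1) x.2.2⟩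

/-- The action of `◇` on a natural transformation `f : P ⟶ Q`, componentwise. -/
def DiaHom {P Q : F.W ⥤ Type} (f : P ⟶ Q) (w : F.W) :
    DiaObj F P w → DiaObj F Q w :=
  fun x => ⟨x.1, x.2.1, f.app x.1 x.2.2⟩

/-- The pointwise product of presheaves. -/
def ProdPsh (P Q : F.W ⥤ Type) : F.W ⥤ Type where
  obj w := P.obj w × Q.obj w
  map i := TypeCat.ofHom (fun x => (P.map i x.1, Q.map i x.2))
  map_id := by intro w; ext x <;> simp
  map_comp := by intro w w' w'' i j; ext x <;> simp

/-- The terminal (unit) presheaf. -/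
def UnitPsh : F.W ⥤ Type where
  obj _ := PUnit
  map _ := TypeCat.ofHom (fun x => x)

/-- The strength map `σ_{P,Q,w} : P(w) × (◇Q)(w) → (◇(P × Q))(w)`. -/
def Strength (P Q : F.W ⥤ Type) (w : F.W) :
    P.obj w × DiaObj F Q w → DiaObj F (ProdPsh F P Q) w :=
  fun x => ⟨x.2.1, x.2.2.1, (P.map (F.incl x.2.2.1) x.1, x.2.2.2)⟩

/-- The action of `×` on natural transformations, pointwise. -/
def ProdHom {P P' Q Q' : F.W ⥤ Type} (f : P ⟶ P') (g : Q ⟶ Q') :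
    ProdPsh F P Q ⟶ ProdPsh F P' Q' where
  app w := TypeCat.ofHom (fun x => (f.app w x.1, g.app w x.2))
  naturality := by
    intro w w' i; ext ⟨a, b⟩
    show (f.app w' (P.map i a), g.app w' (Q.map i b)) = (P'.map i (f.app w a), Q'.map i (g.app w b))
    exact Prod.ext (NatTrans.naturality_apply f i a) (NatTrans.naturality_apply g i b)

/-- The second projection `⊤ × Q ⟶ Q`. -/
def SndHom (Q : F.W ⥤ Type) : ProdPsh F (UnitPsh F) Q ⟶ Q where
  app _ := TypeCat.ofHom (fun x => x.2)
  naturality := by intro w w' i; rfl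

/-- The associator `(P × Q) × R ⟶ P × (Q × R)`. -/
def AssocHom (P Q R : F.W ⥤ Type) :
    ProdPsh F (ProdPsh F P Q) R ⟶ ProdPsh F P (ProdPsh F Q R) where
  app _ := TypeCat.ofHom (fun x => (x.1.1, (x.1.2, x.2)))
  naturality := by intro w w' i; rfl

theorem diaObj_mk_map_congr (P : F.W ⥤ Type) {w v c c' : F.W} (h : c = c')
    (m : F.R w c) (m' : F.R w c') (hm : HEq m m') (k : v ⟶ c) (k' : v ⟶ c')
    (hk : HEq k k') (p : P.obj v) :
    (⟨c, m, P.map k p⟩ : DiaObj F P w) = ⟨c', m', P.map k' p⟩ := by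
  subst h; cases hm; cases hk; rfl

theorem diaMap_id (P : F.W ⥤ Type) (w : F.W) (x : DiaObj F P w) :
    DiaMap F P (𝟙 w) x = x := by
  obtain ⟨v, m, p⟩ := x
  have h := diaObj_mk_map_congr F P (F.factorW_id m) _ _ (F.factor₁_id m) _ _
    (F.factor₂_id m) p
  rwa [Functor.map_id_apply] at h

theorem diaMap_comp (P : F.W ⥤ Type) {w w' w'' : F.W} (i : w ⟶ w') (j : w' ⟶ w'')
    (x : DiaObj F P w) : DiaMap F P (i ≫ j) x = DiaMap F P j (DiaMap F P i x) := by
  obtain ⟨v, m, p⟩ := x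
  have h := diaObj_mk_map_congr F P (F.factorW_comp i j m) _ _ (F.factor₁_comp i j m) _ _
    (F.factor₂_comp i j m) p
  rwa [Functor.map_comp_apply] at h

theorem diaMap_diaHom {P Q : F.W ⥤ Type} (f : P ⟶ Q) {w w' : F.W} (i : w ⟶ w')
    (x : DiaObj F P w) : DiaMap F Q i (DiaHom F f w x) = DiaHom F f w' (DiaMap F P i x) := by
  obtain ⟨v, m, p⟩ := x
  exact congrArg (fun q => (⟨_, F.factor₁ i m, q⟩ : DiaObj F Q w'))
    (NatTrans.naturality_apply f (F.factor₂ i m) p).symm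

theorem diaMap_strength (P Q : F.W ⥤ Type) {w w' : F.W} (i : w ⟶ w')
    (x : P.obj w × DiaObj F Q w) :
    DiaMap F (ProdPsh F P Q) i (Strength F P Q w x) =
      Strength F P Q w' (P.map i x.1, DiaMap F Q i x.2) := by
  obtain ⟨p, v, m, q⟩ := x
  have transport_incl : P.map (F.factor₂ i m) (P.map (F.incl m) p) =
      P.map (F.incl (F.factor₁ i m)) (P.map i p) := by
    rw [← Functor.map_comp_apply, ← Functor.map_comp_apply, F.incl_natural]
  exact congrArg (fun a => (⟨_, F.factor₁ i m, (a, Q.map (F.factor₂ i m) q)⟩ :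
    DiaObj F (ProdPsh F P Q) w')) transport_incl

theorem diaHom_prodHom_strength {P P' Q Q' : F.W ⥤ Type} (f : P ⟶ P') (g : Q ⟶ Q') (w : F.W)
    (x : P.obj w × DiaObj F Q w) :
    DiaHom F (ProdHom F f g) w (Strength F P Q w x) =
      Strength F P' Q' w (f.app w x.1, DiaHom F g w x.2) := by
  obtain ⟨p, v, m, q⟩ := x
  exact congrArg (fun a => (⟨v, m, (a, g.app v q)⟩ : DiaObj F (ProdPsh F P' Q') w))
    (NatTrans.naturality_apply f (F.incl m) p)

/-- for every proof-relevant SLC-frame, `P ↦ ◇P` is a well-defined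
strong endofunctor of the presheaf category `W ⥤ Type`: `◇P` is a presheaf,
`◇f` is a natural transformation, `◇` is functorial, and the strength maps
`σ_{P,Q}` are natural in `w`, `P` and `Q` and satisfy the unit and
associativity coherence laws. -/
theorem dia_strong_endofunctor (F : SLCFrame) :
    -- ◇P is a presheaf: functoriality of transport
    (∀ (P : F.W ⥤ Type) (w : F.W) (x : DiaObj F P w), DiaMap F P (𝟙 w) x = x) ∧
    (∀ (P : F.W ⥤ Type) {w w' w'' : F.W} (i : w ⟶ w') (j : w' ⟶ w'')
       (x : DiaObj F P w), DiaMap F P (i ≫ j) x = DiaMap F P j (DiaMap F P i x)) ∧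
    -- ◇f is a natural transformation ◇P ⟶ ◇Q
    (∀ (P Q : F.W ⥤ Type) (f : P ⟶ Q) {w w' : F.W} (i : w ⟶ w')
       (x : DiaObj F P w), DiaMap F Q i (DiaHom F f w x) = DiaHom F f w' (DiaMap F P i x)) ∧
    -- ◇ is functorial: it preserves identities and composition
    (∀ (P : F.W ⥤ Type) (w : F.W) (x : DiaObj F P w), DiaHom F (𝟙 P) w x = x) ∧
    (∀ (P Q R : F.W ⥤ Type) (f : P ⟶ Q) (g : Q ⟶ R) (w : F.W) (x : DiaObj F P w),
       DiaHom F (f ≫ g) w x = DiaHom F g w (DiaHom F f w x)) ∧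
    -- the strength σ is natural in w
    (∀ (P Q : F.W ⥤ Type) {w w' : F.W} (i : w ⟶ w')
       (x : P.obj w × DiaObj F Q w),
       DiaMap F (ProdPsh F P Q) i (Strength F P Q w x) =
         Strength F P Q w' (P.map i x.1, DiaMap F Q i x.2)) ∧
    -- the strength σ is natural in P and Q
    (∀ (P P' Q Q' : F.W ⥤ Type) (f : P ⟶ P') (g : Q ⟶ Q') (w : F.W)
       (x : P.obj w × DiaObj F Q w),
       DiaHom F (ProdHom F f g) w (Strength F P Q w x) =
         Strength F P' Q' w (f.app w x.1, DiaHom F g w x.2)) ∧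
    -- unit coherence law: σ_{⊤,Q} ≫ ◇π₂ = π₂
    (∀ (Q : F.W ⥤ Type) (w : F.W) (x : (UnitPsh F).obj w × DiaObj F Q w),
       DiaHom F (SndHom F Q) w (Strength F (UnitPsh F) Q w x) = x.2) ∧
    -- associativity coherence law
    (∀ (P Q R : F.W ⥤ Type) (w : F.W)
       (x : (ProdPsh F P Q).obj w × DiaObj F R w),
       DiaHom F (AssocHom F P Q R) w (Strength F (ProdPsh F P Q) R w x) =
         Strength F P (ProdPsh F Q R) w (x.1.1, Strength F Q R w (x.1.2, x.2))) :=
  ⟨diaMap_id F, diaMap_comp F, fun _ _ => diaMap_diaHom F, fun _ _ _ => rfl,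
    fun _ _ _ _ _ _ _ => rfl, diaMap_strength F, fun _ _ _ _ => diaHom_prodHom_strength F,
    fun _ _ _ => rfl, fun _ _ _ _ _ => rfl⟩
end

section
/- For every proof-relevant MLC-frame, the strong endofunctor ◇ of Psh(W) = W ⥤ Type is a strong monad: point (given by point_{P,w}(p) = (w, reflR w, p)) and join (given by join_{P,w}(v, m, (v', m', p)) = (v', transR m m', p)) are strong natural transformations, join is associative, and the monad unit laws hold: join_P ∘ ◇(point_P) = id_{◇P} and join_P ∘ point_{◇P} = id_{◇P} for every presheaf P. -/
open CategoryTheory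

variable (F : SLCFrame)

/-- A proof-relevant MLC-frame: an SLC-frame further equipped with reflexivity
`reflR` and transitivity `transR` for `R`, coherent with `factor` and `incl`,
with `reflR` a two-sided unit for `transR`. -/
structure MLCFrame extends SLCFrame where
  reflR : ∀ w : W, R w w
  transR : ∀ {u v w : W}, R u v → R v w → R u w
  factorW_refl : ∀ {w w' : W} (i : w ⟶ w'), factorW i (reflR w) = w'
  factor₁_refl : ∀ {w w' : W} (i : w ⟶ w'), HEq (factor₁ i (reflR w)) (reflR w')
  factor₂_refl : ∀ {w w' : W} (i : w ⟶ w'), HEq (factor₂ i (reflR w)) i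
  incl_refl : ∀ w : W, incl (reflR w) = 𝟙 w
  factorW_trans : ∀ {w w' u v : W} (i : w ⟶ w') (m₁ : R w u) (m₂ : R u v),
    factorW i (transR m₁ m₂) = factorW (factor₂ i m₁) m₂
  factor₁_trans : ∀ {w w' u v : W} (i : w ⟶ w') (m₁ : R w u) (m₂ : R u v),
    HEq (factor₁ i (transR m₁ m₂))
        (transR (factor₁ i m₁) (factor₁ (factor₂ i m₁) m₂))
  factor₂_trans : ∀ {w w' u v : W} (i : w ⟶ w') (m₁ : R w u) (m₂ : R u v),
    HEq (factor₂ i (transR m₁ m₂)) (factor₂ (factor₂ i m₁) m₂)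
  transR_assoc : ∀ {u v w x : W} (m₁ : R u v) (m₂ : R v w) (m₃ : R w x),
    transR (transR m₁ m₂) m₃ = transR m₁ (transR m₂ m₃)
  incl_trans : ∀ {u v w : W} (m₁ : R u v) (m₂ : R v w),
    incl (transR m₁ m₂) = incl m₁ ≫ incl m₂
  transR_refl_left : ∀ {w v : W} (m : R w v), transR (reflR w) m = m
  transR_refl_right : ∀ {w v : W} (m : R w v), transR m (reflR v) = m

/-- The object part of `◇◇P`. -/
def Dia2Obj (F : SLCFrame) (P : F.W ⥤ Type) (w : F.W) : Type :=
  Σ v : F.W, F.R w v × DiaObj F P v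

/-- Transport of `◇◇P` along `i : w ⟶ w'`. -/
def Dia2Map (F : SLCFrame) (P : F.W ⥤ Type) {w w' : F.W} (i : w ⟶ w') :
    Dia2Obj F P w → Dia2Obj F P w' :=
  fun x => ⟨F.factorW i x.2.1, F.factor₁ i x.2.1, DiaMap F P (F.factor₂ i x.2.1) x.2.2⟩

/-- The object part of `◇◇◇P`. -/
def Dia3Obj (F : SLCFrame) (P : F.W ⥤ Type) (w : F.W) : Type :=
  Σ v : F.W, F.R w v × Dia2Obj F P v

/-- The point map `point_{P,w} : P(w) → (◇P)(w)`. -/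
def Point (F : MLCFrame) (P : F.W ⥤ Type) (w : F.W) :
    P.obj w → DiaObj F.toSLCFrame P w :=
  fun p => ⟨w, F.reflR w, p⟩

/-- The join map `join_{P,w} : (◇◇P)(w) → (◇P)(w)`. -/
def Join (F : MLCFrame) (P : F.W ⥤ Type) (w : F.W) :
    Dia2Obj F.toSLCFrame P w → DiaObj F.toSLCFrame P w :=
  fun x => ⟨x.2.2.1, F.transR x.2.1 x.2.2.2.1, x.2.2.2.2⟩

/-!
Each monad law, read componentwise on the Σ-type `(◇P)(w)`, is one of the frame axioms:
naturality of `point` and `join` in the world is the compatibility of `factor` with `reflR` and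
`transR`, their strength is `incl_refl` and `incl_trans`, and associativity and the unit laws are
those of `transR`. Naturality in the presheaf holds definitionally.
-/

theorem diaObj_mk_map_eq {F : SLCFrame} {P : F.W ⥤ Type} {w u v v' : F.W} (h : v = v')
    {m : F.R w v} {m' : F.R w v'} (hm : HEq m m') {f : u ⟶ v} {f' : u ⟶ v'} (hf : HEq f f')
    (p : P.obj u) :
    (⟨v, m, P.map f p⟩ : DiaObj F P w) = ⟨v', m', P.map f' p⟩ := by
  subst h; cases hm; cases hf; rfl

section

variable {F : MLCFrame} (P Q : F.W ⥤ Type)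

theorem diaMap_point {w w' : F.W} (i : w ⟶ w') (p : P.obj w) :
    DiaMap F.toSLCFrame P i (Point F P w p) = Point F P w' (P.map i p) :=
  diaObj_mk_map_eq (F.factorW_refl i) (F.factor₁_refl i) (F.factor₂_refl i) p

theorem diaHom_point (f : P ⟶ Q) (w : F.W) (p : P.obj w) :
    DiaHom F.toSLCFrame f w (Point F P w p) = Point F Q w (f.app w p) :=
  rfl

theorem strength_point (w : F.W) (x : P.obj w × Q.obj w) :
    Strength F.toSLCFrame P Q w (x.1, Point F Q w x.2) =
      Point F (ProdPsh F.toSLCFrame P Q) w x := by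
  show (⟨w, F.reflR w, (P.map (F.incl (F.reflR w)) x.1, x.2)⟩ :
    DiaObj F.toSLCFrame (ProdPsh F.toSLCFrame P Q) w) = ⟨w, F.reflR w, x⟩
  rw [F.incl_refl, Functor.map_id_apply]

theorem diaMap_join {w w' : F.W} (i : w ⟶ w') (x : Dia2Obj F.toSLCFrame P w) :
    DiaMap F.toSLCFrame P i (Join F P w x) = Join F P w' (Dia2Map F.toSLCFrame P i x) := by
  obtain ⟨u, m₁, v, m₂, p⟩ := x
  exact diaObj_mk_map_eq (F.factorW_trans i m₁ m₂) (F.factor₁_trans i m₁ m₂)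
    (F.factor₂_trans i m₁ m₂) p

theorem diaHom_join (f : P ⟶ Q) (w : F.W) (x : Dia2Obj F.toSLCFrame P w) :
    DiaHom F.toSLCFrame f w (Join F P w x) =
      Join F Q w ⟨x.1, x.2.1, DiaHom F.toSLCFrame f x.1 x.2.2⟩ :=
  rfl

theorem join_join (w : F.W) (x : Dia3Obj F.toSLCFrame P w) :
    Join F P w ⟨x.2.2.1, F.transR x.2.1 x.2.2.2.1, x.2.2.2.2⟩ =
      Join F P w ⟨x.1, x.2.1, Join F P x.1 x.2.2⟩ := by
  obtain ⟨u, m₁, v, m₂, t, m₃, p⟩ := x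
  exact congrArg (fun m => (⟨t, m, p⟩ : DiaObj F.toSLCFrame P w)) (F.transR_assoc m₁ m₂ m₃)

theorem join_strength (w : F.W) (p : P.obj w) (x : Dia2Obj F.toSLCFrame Q w) :
    Join F (ProdPsh F.toSLCFrame P Q) w
        ⟨x.1, x.2.1, Strength F.toSLCFrame P Q x.1 (P.map (F.incl x.2.1) p, x.2.2)⟩ =
      Strength F.toSLCFrame P Q w (p, Join F Q w x) := by
  obtain ⟨u, m₁, v, m₂, q⟩ := x
  show (⟨v, F.transR m₁ m₂, (P.map (F.incl m₂) (P.map (F.incl m₁) p), q)⟩ :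
    DiaObj F.toSLCFrame (ProdPsh F.toSLCFrame P Q) w) =
      ⟨v, F.transR m₁ m₂, (P.map (F.incl (F.transR m₁ m₂)) p, q)⟩
  rw [F.incl_trans, Functor.map_comp_apply]

theorem join_diaHom_point (w : F.W) (x : DiaObj F.toSLCFrame P w) :
    Join F P w ⟨x.1, x.2.1, Point F P x.1 x.2.2⟩ = x := by
  obtain ⟨v, m, p⟩ := x
  exact congrArg (fun m => (⟨v, m, p⟩ : DiaObj F.toSLCFrame P w)) (F.transR_refl_right m)

theorem join_point (w : F.W) (x : DiaObj F.toSLCFrame P w) :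
    Join F P w ⟨w, F.reflR w, x⟩ = x := by
  obtain ⟨v, m, p⟩ := x
  exact congrArg (fun m => (⟨v, m, p⟩ : DiaObj F.toSLCFrame P w)) (F.transR_refl_left m)

end

/-- for every proof-relevant MLC-frame, the strong endofunctor `◇`
of `W ⥤ Type` is a strong monad: `point` and `join` are strong natural
transformations, `join` is associative, and the monad unit laws hold. -/
theorem dia_strong_monad (F : MLCFrame) :
    -- point_P is a natural transformation P ⟶ ◇P (naturality in w)
    (∀ (P : F.W ⥤ Type) {w w' : F.W} (i : w ⟶ w') (p : P.obj w),
       DiaMap F.toSLCFrame P i (Point F P w p) = Point F P w' (P.map i p)) ∧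
    -- point is natural in P
    (∀ (P Q : F.W ⥤ Type) (f : P ⟶ Q) (w : F.W) (p : P.obj w),
       DiaHom F.toSLCFrame f w (Point F P w p) = Point F Q w (f.app w p)) ∧
    -- point is strong: σ_{P,Q} ∘ (id_P × point_Q) = point_{P×Q}
    (∀ (P Q : F.W ⥤ Type) (w : F.W) (x : P.obj w × Q.obj w),
       Strength F.toSLCFrame P Q w (x.1, Point F Q w x.2) =
         Point F (ProdPsh F.toSLCFrame P Q) w x) ∧
    -- join_P is a natural transformation ◇◇P ⟶ ◇P (naturality in w)
    (∀ (P : F.W ⥤ Type) {w w' : F.W} (i : w ⟶ w') (x : Dia2Obj F.toSLCFrame P w),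
       DiaMap F.toSLCFrame P i (Join F P w x) = Join F P w' (Dia2Map F.toSLCFrame P i x)) ∧
    -- join is natural in P
    (∀ (P Q : F.W ⥤ Type) (f : P ⟶ Q) (w : F.W) (x : Dia2Obj F.toSLCFrame P w),
       DiaHom F.toSLCFrame f w (Join F P w x) =
         Join F Q w ⟨x.1, x.2.1, DiaHom F.toSLCFrame f x.1 x.2.2⟩) ∧
    -- join is associative: join_P ∘ join_{◇P} = join_P ∘ ◇(join_P)
    (∀ (P : F.W ⥤ Type) (w : F.W) (x : Dia3Obj F.toSLCFrame P w),
       Join F P w ⟨x.2.2.1, F.transR x.2.1 x.2.2.2.1, x.2.2.2.2⟩ =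
         Join F P w ⟨x.1, x.2.1, Join F P x.1 x.2.2⟩) ∧
    -- join is strong: join_{P×Q} ∘ ◇(σ_{P,Q}) ∘ σ_{P,◇Q} = σ_{P,Q} ∘ (id_P × join_Q)
    (∀ (P Q : F.W ⥤ Type) (w : F.W) (p : P.obj w) (x : Dia2Obj F.toSLCFrame Q w),
       Join F (ProdPsh F.toSLCFrame P Q) w
         ⟨x.1, x.2.1, Strength F.toSLCFrame P Q x.1 (P.map (F.incl x.2.1) p, x.2.2)⟩ =
         Strength F.toSLCFrame P Q w (p, Join F Q w x)) ∧
    -- monad unit laws: join_P ∘ ◇(point_P) = id and join_P ∘ point_{◇P} = id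
    (∀ (P : F.W ⥤ Type) (w : F.W) (x : DiaObj F.toSLCFrame P w),
       Join F P w ⟨x.1, x.2.1, Point F P x.1 x.2.2⟩ = x) ∧
    (∀ (P : F.W ⥤ Type) (w : F.W) (x : DiaObj F.toSLCFrame P w),
       Join F P w ⟨w, F.reflR w, x⟩ = x) :=
  ⟨diaMap_point, diaHom_point, strength_point, diaMap_join, diaHom_join, join_join,
    join_strength, join_diaHom_point, join_point⟩
end

section
/- Inadmissibility of axiom R: there is no closed term t with ⊢ t : ι → ◇ι in the calculus SLC, and there is no closed term t with ⊢ t : ι → ◇ι in the calculus JLC; hence the return axiom R is not derivable in SLC or JLC. -/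
/-- Types (shared by SLC and JLC): base, unit, products, functions, ◇. -/
inductive Ty : Type
  | base : Ty
  | unit : Ty
  | prod : Ty → Ty → Ty
  | arr : Ty → Ty → Ty
  | dia : Ty → Ty

/-- Typing contexts (de Bruijn; the head is the most recently bound variable). -/
abbrev Ctx := List Ty

/-- Raw terms of SLC (with the letmap construct). -/
inductive TmS : Type
  | var : ℕ → TmS
  | unit : TmS
  | pair : TmS → TmS → TmS
  | fst : TmS → TmS
  | snd : TmS → TmS
  | lam : TmS → TmS
  | app : TmS → TmS → TmS
  | letm : TmS → TmS → TmS        -- letmap x = t in u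

/-- Raw terms of JLC (with the letmap and letjoin constructs). -/
inductive TmJ : Type
  | var : ℕ → TmJ
  | unit : TmJ
  | pair : TmJ → TmJ → TmJ
  | fst : TmJ → TmJ
  | snd : TmJ → TmJ
  | lam : TmJ → TmJ
  | app : TmJ → TmJ → TmJ
  | letm : TmJ → TmJ → TmJ        -- letmap x = t in u
  | letj : TmJ → TmJ → TmJ        -- letjoin x = t in u

/-- The typing judgment `Γ ⊢ t : A` of SLC. -/
inductive HasTyS : Ctx → TmS → Ty → Prop
  | var {Γ n A} : Γ[n]? = some A → HasTyS Γ (.var n) A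
  | unit {Γ} : HasTyS Γ .unit .unit
  | pair {Γ t u A B} : HasTyS Γ t A → HasTyS Γ u B → HasTyS Γ (.pair t u) (.prod A B)
  | fst {Γ t A B} : HasTyS Γ t (.prod A B) → HasTyS Γ (.fst t) A
  | snd {Γ t A B} : HasTyS Γ t (.prod A B) → HasTyS Γ (.snd t) B
  | lam {Γ t A B} : HasTyS (A :: Γ) t B → HasTyS Γ (.lam t) (.arr A B)
  | app {Γ t u A B} : HasTyS Γ t (.arr A B) → HasTyS Γ u A → HasTyS Γ (.app t u) B
  | letm {Γ t u A B} : HasTyS Γ t (.dia A) → HasTyS (A :: Γ) u B →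
      HasTyS Γ (.letm t u) (.dia B)

/-- The typing judgment `Γ ⊢ t : A` of JLC. -/
inductive HasTyJ : Ctx → TmJ → Ty → Prop
  | var {Γ n A} : Γ[n]? = some A → HasTyJ Γ (.var n) A
  | unit {Γ} : HasTyJ Γ .unit .unit
  | pair {Γ t u A B} : HasTyJ Γ t A → HasTyJ Γ u B → HasTyJ Γ (.pair t u) (.prod A B)
  | fst {Γ t A B} : HasTyJ Γ t (.prod A B) → HasTyJ Γ (.fst t) A
  | snd {Γ t A B} : HasTyJ Γ t (.prod A B) → HasTyJ Γ (.snd t) B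
  | lam {Γ t A B} : HasTyJ (A :: Γ) t B → HasTyJ Γ (.lam t) (.arr A B)
  | app {Γ t u A B} : HasTyJ Γ t (.arr A B) → HasTyJ Γ u A → HasTyJ Γ (.app t u) B
  | letm {Γ t u A B} : HasTyJ Γ t (.dia A) → HasTyJ (A :: Γ) u B →
      HasTyJ Γ (.letm t u) (.dia B)
  | letj {Γ t u A B} : HasTyJ Γ t (.dia A) → HasTyJ (A :: Γ) u (.dia B) →
      HasTyJ Γ (.letj t u) (.dia B)

/-!
Read every type as a proposition, with `◇A` read as falsity. Both calculi are sound for this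
reading: the only rules that introduce a `◇`-type, letmap and letjoin, have a premise of
`◇`-type, so their conclusion holds vacuously. But `ι → ◇ι` reads as `True → False`, so it has
no closed inhabitant.
-/

def Ty.Interp : Ty → Prop
  | .base => True
  | .unit => True
  | .prod A B => A.Interp ∧ B.Interp
  | .arr A B => A.Interp → B.Interp
  | .dia _ => False

def Ctx.Interp (Γ : Ctx) : Prop := ∀ A ∈ Γ, A.Interp

theorem Ctx.interp_nil : Ctx.Interp [] := List.forall_mem_nil _

theorem Ctx.Interp.cons {Γ : Ctx} {A : Ty} (hA : A.Interp) (hΓ : Γ.Interp) :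
    Ctx.Interp (A :: Γ) :=
  List.forall_mem_cons.mpr ⟨hA, hΓ⟩

theorem Ctx.Interp.getElem? {Γ : Ctx} {n : ℕ} {A : Ty} (hΓ : Γ.Interp) (hn : Γ[n]? = some A) :
    A.Interp :=
  hΓ A (List.mem_of_getElem? hn)

theorem Ty.not_interp_arr_base_dia (A : Ty) : ¬ (Ty.arr .base (.dia A)).Interp :=
  fun h => h trivial

theorem HasTyS.sound {Γ : Ctx} {t : TmS} {A : Ty} (h : HasTyS Γ t A) :
    Γ.Interp → A.Interp := by
  induction h with
  | var hn => exact fun hΓ => hΓ.getElem? hn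
  | unit => exact fun _ => trivial
  | pair _ _ iht ihu => exact fun hΓ => ⟨iht hΓ, ihu hΓ⟩
  | fst _ ih => exact fun hΓ => (ih hΓ).1
  | snd _ ih => exact fun hΓ => (ih hΓ).2
  | lam _ ih => exact fun hΓ a => ih (hΓ.cons a)
  | app _ _ iht ihu => exact fun hΓ => iht hΓ (ihu hΓ)
  | letm _ _ iht _ => exact fun hΓ => (iht hΓ).elim

theorem HasTyJ.sound {Γ : Ctx} {t : TmJ} {A : Ty} (h : HasTyJ Γ t A) :
    Γ.Interp → A.Interp := by
  induction h with
  | var hn => exact fun hΓ => hΓ.getElem? hn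
  | unit => exact fun _ => trivial
  | pair _ _ iht ihu => exact fun hΓ => ⟨iht hΓ, ihu hΓ⟩
  | fst _ ih => exact fun hΓ => (ih hΓ).1
  | snd _ ih => exact fun hΓ => (ih hΓ).2
  | lam _ ih => exact fun hΓ a => ih (hΓ.cons a)
  | app _ _ iht ihu => exact fun hΓ => iht hΓ (ihu hΓ)
  | letm _ _ iht _ => exact fun hΓ => (iht hΓ).elim
  | letj _ _ iht _ => exact fun hΓ => (iht hΓ).elim

/-- inadmissibility of axiom R: there is no closed term of type
`ι → ◇ι` in SLC, and none in JLC. -/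
theorem return_axiom_inadmissible :
    (¬ ∃ t : TmS, HasTyS [] t (.arr .base (.dia .base))) ∧
    (¬ ∃ t : TmJ, HasTyJ [] t (.arr .base (.dia .base))) :=
  ⟨fun ⟨_, ht⟩ => Ty.not_interp_arr_base_dia _ (ht.sound Ctx.interp_nil),
   fun ⟨_, ht⟩ => Ty.not_interp_arr_base_dia _ (ht.sound Ctx.interp_nil)⟩
end

section
/- Inadmissibility of axiom J: there is no closed term t with ⊢ t : ◇◇ι → ◇ι in the calculus SLC, and there is no closed term t with ⊢ t : ◇◇ι → ◇ι in the calculus RLC; hence the join axiom J is not derivable in SLC or RLC. -/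
/-- Raw terms of RLC (with the return and letmap constructs). -/
inductive TmR : Type
  | var : ℕ → TmR
  | unit : TmR
  | pair : TmR → TmR → TmR
  | fst : TmR → TmR
  | snd : TmR → TmR
  | lam : TmR → TmR
  | app : TmR → TmR → TmR
  | ret : TmR → TmR               -- return t
  | letm : TmR → TmR → TmR        -- letmap x = t in u

/-- The typing judgment `Γ ⊢ t : A` of RLC. -/
inductive HasTyR : Ctx → TmR → Ty → Prop
  | var {Γ n A} : Γ[n]? = some A → HasTyR Γ (.var n) A
  | unit {Γ} : HasTyR Γ .unit .unit
  | pair {Γ t u A B} : HasTyR Γ t A → HasTyR Γ u B → HasTyR Γ (.pair t u) (.prod A B)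
  | fst {Γ t A B} : HasTyR Γ t (.prod A B) → HasTyR Γ (.fst t) A
  | snd {Γ t A B} : HasTyR Γ t (.prod A B) → HasTyR Γ (.snd t) B
  | lam {Γ t A B} : HasTyR (A :: Γ) t B → HasTyR Γ (.lam t) (.arr A B)
  | app {Γ t u A B} : HasTyR Γ t (.arr A B) → HasTyR Γ u A → HasTyR Γ (.app t u) B
  | ret {Γ t A} : HasTyR Γ t A → HasTyR Γ (.ret t) (.dia A)
  | letm {Γ t u A B} : HasTyR Γ t (.dia A) → HasTyR (A :: Γ) u B →
      HasTyR Γ (.letm t u) (.dia B)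

/-!
Both calculi are sound for a Kripke model over the stages `0 ≤ 1 ≤ 2 ≤ …` of `ℕ` in which `ι`
holds from stage `2` on and `◇A` holds at a stage when `A` holds at the next one: `return` is
persistence, `letmap` is `◇` applied to an implication. At stage `0` the formula `◇◇ι` holds but
`◇ι` does not, so `◇◇ι → ◇ι` is not forced there. SLC embeds into RLC, so one model rules out
both calculi.
-/

def Ty.Forces : Ty → ℕ → Prop
  | .base, n => 2 ≤ n
  | .unit, _ => True
  | .prod A B, n => A.Forces n ∧ B.Forces n
  | .arr A B, n => ∀ m, n ≤ m → A.Forces m → B.Forces m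
  | .dia A, n => A.Forces (n + 1)

def Ctx.Forces (Γ : Ctx) (n : ℕ) : Prop := ∀ A ∈ Γ, A.Forces n

theorem Ty.Forces.mono : ∀ {A : Ty} {n m : ℕ}, n ≤ m → A.Forces n → A.Forces m
  | .base, _, _, h, hA => le_trans hA h
  | .unit, _, _, _, _ => trivial
  | .prod _ _, _, _, h, ⟨hA, hB⟩ => ⟨hA.mono h, hB.mono h⟩
  | .arr _ _, _, _, h, hf => fun k hk hA => hf k (le_trans h hk) hA
  | .dia A, _, _, h, hA => Ty.Forces.mono (A := A) (Nat.succ_le_succ h) hA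

theorem Ctx.Forces.mono {Γ : Ctx} {n m : ℕ} (h : n ≤ m) (hΓ : Γ.Forces n) : Γ.Forces m :=
  fun A hA => (hΓ A hA).mono h

theorem Ctx.Forces.cons {Γ : Ctx} {A : Ty} {n : ℕ} (hA : A.Forces n) (hΓ : Γ.Forces n) :
    Ctx.Forces (A :: Γ) n :=
  List.forall_mem_cons.2 ⟨hA, hΓ⟩

theorem HasTyR.forces {Γ : Ctx} {t : TmR} {A : Ty} (h : HasTyR Γ t A) :
    ∀ n, Γ.Forces n → A.Forces n := by
  induction h with
  | var hA => exact fun n hΓ => hΓ _ (List.mem_of_getElem? hA)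
  | unit => exact fun _ _ => trivial
  | pair _ _ iht ihu => exact fun n hΓ => ⟨iht n hΓ, ihu n hΓ⟩
  | fst _ ih => exact fun n hΓ => (ih n hΓ).1
  | snd _ ih => exact fun n hΓ => (ih n hΓ).2
  | lam _ ih => exact fun n hΓ m hm hA => ih m ((hΓ.mono hm).cons hA)
  | app _ _ iht ihu => exact fun n hΓ => iht n hΓ n le_rfl (ihu n hΓ)
  | ret _ ih => exact fun n hΓ => ((ih n hΓ).mono n.le_succ :)
  | letm _ _ iht ihu => exact fun n hΓ => ihu (n + 1) (.cons (iht n hΓ) (hΓ.mono n.le_succ))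

def TmS.toTmR : TmS → TmR
  | .var n => .var n
  | .unit => .unit
  | .pair t u => .pair t.toTmR u.toTmR
  | .fst t => .fst t.toTmR
  | .snd t => .snd t.toTmR
  | .lam t => .lam t.toTmR
  | .app t u => .app t.toTmR u.toTmR
  | .letm t u => .letm t.toTmR u.toTmR

theorem HasTyS.toTmR {Γ : Ctx} {t : TmS} {A : Ty} (h : HasTyS Γ t A) : HasTyR Γ t.toTmR A := by
  induction h with
  | var hA => exact .var hA
  | unit => exact .unit
  | pair _ _ iht ihu => exact .pair iht ihu
  | fst _ ih => exact .fst ih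
  | snd _ ih => exact .snd ih
  | lam _ ih => exact .lam ih
  | app _ _ iht ihu => exact .app iht ihu
  | letm _ _ iht ihu => exact .letm iht ihu

theorem not_forces_join_zero : ¬ (Ty.arr (.dia (.dia .base)) (.dia .base)).Forces 0 :=
  fun h => Nat.not_succ_le_self 1 (h 0 le_rfl (le_refl 2))

theorem not_hasTyR_join : ¬ ∃ t : TmR, HasTyR [] t (.arr (.dia (.dia .base)) (.dia .base)) :=
  fun ⟨_, ht⟩ => not_forces_join_zero (ht.forces 0 (by simp [Ctx.Forces]))

/-- inadmissibility of axiom J: there is no closed term of type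
`◇◇ι → ◇ι` in SLC, and none in RLC. -/
theorem join_axiom_inadmissible :
    (¬ ∃ t : TmS, HasTyS [] t (.arr (.dia (.dia .base)) (.dia .base))) ∧
    (¬ ∃ t : TmR, HasTyR [] t (.arr (.dia (.dia .base)) (.dia .base))) :=
  ⟨fun ⟨t, ht⟩ => not_hasTyR_join ⟨t.toTmR, ht.toTmR⟩, not_hasTyR_join⟩
end
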